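/- arXiv:2405.15731 — 5 statements merged into one kernel-verified Lean document; each statement's English description precedes it below -/
import Mathlib

section
/- Let q_0,…,q_L, k_0,…,k_L ∈ ℝ^m, let φ, ψ : ℝ^m → ℝ^n, let W_V ∈ ℝ^{d×d}, and let η_0,…,η_L be nonzero real numbers. Define the separable attention output y_i = Σ_{j=0}^{i} (φ(q_i)ᵀ ψ(k_j) / η_i) W_V u_j for an input sequence u_0,…,u_L ∈ ℝ^d. Then this output equals, at every time step i, the output of the LTV system of state dimension N = nd with Λ_0 = I_{nd}, Λ_i = (η_{i-1}/η_i) I_{nd} for i ≥ 1, B_i = (1/η_i)(I_d ⊗ ψ(k_i)) W_V ∈ ℝ^{nd×d}, C_i = I_d ⊗ φ(q_i)ᵀ ∈ ℝ^{d×nd}, and D_i = 0, where ⊗ denotes the Kronecker product. -/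
open Matrix

/-- Hidden state of an LTV system: `h_{-1} = 0`, `h_i = Λ_i h_{i-1} + B_i u_i`. -/
def ltvState {S U : Type} [Fintype S] [Fintype U]
    (Λ : ℕ → Matrix S S ℝ) (B : ℕ → Matrix S U ℝ) (u : ℕ → U → ℝ) : ℕ → S → ℝ
  | 0 => Λ 0 *ᵥ (0 : S → ℝ) + B 0 *ᵥ u 0
  | i + 1 => Λ (i + 1) *ᵥ ltvState Λ B u i + B (i + 1) *ᵥ u (i + 1)

/-- Output of an LTV system: `y_i = C_i h_i + D_i u_i`. -/
def ltvOutput {S U Y : Type} [Fintype S] [Fintype U]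
    (Λ : ℕ → Matrix S S ℝ) (B : ℕ → Matrix S U ℝ) (C : ℕ → Matrix Y S ℝ)
    (D : ℕ → Matrix Y U ℝ) (u : ℕ → U → ℝ) (i : ℕ) : Y → ℝ :=
  C i *ᵥ ltvState Λ B u i + D i *ᵥ u i

/-!
With the scalar transitions `Λ_t = (η_{t-1}/η_t) I` the recursion telescopes to
`η_t h_t = Σ_{j ≤ t} η_j B_j u_j`. Read as a `d × n` matrix, the state is therefore the normalized
key-value memory `(1/η_t) Σ_{j ≤ t} (W_V u_j) ψ(k_j)ᵀ`, and the readout `C_t = I_d ⊗ φ(q_t)ᵀ`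
multiplies this matrix by `φ(q_t)`, which is the attention sum.
-/

open Finset

section LTV

variable {S U : Type} [Fintype S] [Fintype U] [DecidableEq S]

theorem smul_ltvState_eq_sum {Λ : ℕ → Matrix S S ℝ} {B : ℕ → Matrix S U ℝ} {u : ℕ → U → ℝ}
    {η : ℕ → ℝ} (hη : ∀ t, η (t + 1) ≠ 0) (hΛ : ∀ t, Λ (t + 1) = (η t / η (t + 1)) • 1) (t : ℕ) :
    η t • ltvState Λ B u t = ∑ j ∈ range (t + 1), η j • (B j *ᵥ u j) := by
  induction t with
  | zero => simp [ltvState]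
  | succ t ih =>
    rw [sum_range_succ, ← ih, ltvState, hΛ, smul_mulVec, one_mulVec, smul_add, smul_smul,
      mul_div_cancel₀ _ (hη t)]

end LTV

section Kronecker

variable {ι κ U : Type*}

theorem mulVec_of_kronecker_col [Fintype U] (w : κ → ℝ) (M : Matrix ι U ℝ) (v : U → ℝ) :
    (of fun (p : ι × κ) j => w p.2 * M p.1 j) *ᵥ v = fun p => vecMulVec (M *ᵥ v) w p.1 p.2 := by
  ext p
  simp only [mulVec, dotProduct, of_apply, vecMulVec_apply, sum_mul]
  exact sum_congr rfl fun _ _ => by ring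

theorem mulVec_of_kronecker_row [Fintype ι] [Fintype κ] [DecidableEq ι] (w : κ → ℝ)
    (h : ι × κ → ℝ) :
    (of fun j (p : ι × κ) => if j = p.1 then w p.2 else 0) *ᵥ h = of (Function.curry h) *ᵥ w := by
  ext a
  simp only [mulVec, dotProduct, of_apply, mul_comm, mul_ite, mul_zero, Fintype.sum_prod_type,
    sum_ite_irrel, sum_const_zero, sum_ite_eq, mem_univ, if_true, Function.curry_apply]

end Kronecker

/-- The state is indexed by `Fin d × Fin n`, and the Kronecker products
`B_i = (1/η_i)(I_d ⊗ ψ(k_i)) W_V` and `C_i = I_d ⊗ φ(q_i)ᵀ` are written out entrywise. -/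
theorem separable_attention_as_ltv (m n d : ℕ)
    (q k : ℕ → Fin m → ℝ) (φ ψ : (Fin m → ℝ) → Fin n → ℝ)
    (WV : Matrix (Fin d) (Fin d) ℝ)
    (η : ℕ → ℝ) (hη : ∀ i, η i ≠ 0)
    (u : ℕ → Fin d → ℝ) (i : ℕ) :
    (∑ j ∈ Finset.range (i + 1), (φ (q i) ⬝ᵥ ψ (k j) / η i) • (WV *ᵥ u j)) =
    ltvOutput
      (fun t => if t = 0 then (1 : Matrix (Fin d × Fin n) (Fin d × Fin n) ℝ)
        else (η (t - 1) / η t) • (1 : Matrix (Fin d × Fin n) (Fin d × Fin n) ℝ))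
      (fun t => Matrix.of fun (p : Fin d × Fin n) (j : Fin d) =>
        (1 / η t) * (ψ (k t) p.2 * WV p.1 j))
      (fun t => Matrix.of fun (j : Fin d) (p : Fin d × Fin n) =>
        if j = p.1 then φ (q t) p.2 else 0)
      (fun _ => (0 : Matrix (Fin d) (Fin d) ℝ)) u i := by
  set Λ : ℕ → Matrix (Fin d × Fin n) (Fin d × Fin n) ℝ := fun t =>
    if t = 0 then 1 else (η (t - 1) / η t) • 1
  set B : ℕ → Matrix (Fin d × Fin n) (Fin d) ℝ := fun t =>
    of fun p j => (1 / η t) * (ψ (k t) p.2 * WV p.1 j)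
  have hΛ (t : ℕ) : Λ (t + 1) = (η t / η (t + 1)) • 1 := if_neg t.succ_ne_zero
  have hB (t : ℕ) : η t • (B t *ᵥ u t) = fun p => vecMulVec (WV *ᵥ u t) (ψ (k t)) p.1 p.2 := by
    change η t • (((1 / η t) • of fun (p : Fin d × Fin n) j => ψ (k t) p.2 * WV p.1 j) *ᵥ u t) = _
    rw [smul_mulVec, smul_smul, mul_one_div_cancel (hη t), one_smul, mulVec_of_kronecker_col]
  have hstate : of (Function.curry (ltvState Λ B u i)) =
      (η i)⁻¹ • ∑ j ∈ range (i + 1), vecMulVec (WV *ᵥ u j) (ψ (k j)) := by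
    rw [eq_inv_smul_iff₀ (hη i)]
    ext a b
    simpa [hB, Matrix.sum_apply] using
      congrFun (smul_ltvState_eq_sum (B := B) (u := u) (fun t => hη (t + 1)) hΛ i) (a, b)
  rw [ltvOutput, zero_mulVec, add_zero, mulVec_of_kronecker_row, hstate, smul_mulVec, sum_mulVec,
    smul_sum]
  refine sum_congr rfl fun j _ => ?_
  rw [vecMulVec_mulVec, op_smul_eq_smul, smul_smul, dotProduct_comm, div_eq_inv_mul]
end

section
/- For m ≥ 1 and any x ∈ ℝ^m, the family of squared feature values (Φ(x)_{(p,f)}²)_{(p,f) ∈ I} is summable and Σ_{(p,f) ∈ I} Φ(x)_{(p,f)}² = e^{‖x‖²}, where ‖x‖² = Σ_{l=1}^{m} x_l². In particular the infinite-dimensional feature vector Φ(x) is square-summable for every x. -/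
/-!
Group the indices `(p, f)` by their degree `p`. Expanding `(∑ l, x l ^ 2) ^ p` over all words
`f : Fin p → Fin m` shows that the squared features of degree `p` sum to `‖x‖² ^ p / p!`, so the
grouped sums form the exponential series of `‖x‖²`; since all terms are nonnegative, the
regrouping is legitimate and the whole family is summable with the same sum.
-/

/-- The index set `I = {(p, f) : p ∈ ℕ, f : Fin p → Fin m}` of the infinite-dimensional
softmax feature map. -/
def FeatIdx (m : ℕ) : Type := Σ p : ℕ, Fin p → Fin m

/-- The feature map `Φ(x)_{(p,f)} = (p!)^{-1/2} ∏_{j<p} x_{f j}`. -/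
noncomputable def featMap (m : ℕ) (x : Fin m → ℝ) (i : FeatIdx m) : ℝ :=
  ((i.1.factorial : ℝ) ^ (-(1 / 2 : ℝ))) * ∏ j : Fin i.1, x (i.2 j)

theorem HasSum.of_sigma_of_nonneg {α : Type*} {β : α → Type*} [∀ a, Fintype (β a)]
    {f : (Σ a, β a) → ℝ} (hf : ∀ i, 0 ≤ f i) {s : ℝ} (h : HasSum (fun a => ∑ b, f ⟨a, b⟩) s) :
    HasSum f s := by
  have hfib (a : α) : HasSum (fun b => f ⟨a, b⟩) (∑ b, f ⟨a, b⟩) := hasSum_fintype _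
  have hf_summable : Summable f :=
    (summable_sigma_of_nonneg hf).2 ⟨fun a => (hfib a).summable,
      h.summable.congr fun a => (hfib a).tsum_eq.symm⟩
  have hf_hasSum := hf_summable.hasSum
  rwa [(hf_hasSum.sigma hfib).unique h] at hf_hasSum

lemma featMap_sq (m : ℕ) (x : Fin m → ℝ) (i : FeatIdx m) :
    featMap m x i ^ 2 = (∏ j, x (i.2 j) ^ 2) / i.1.factorial := by
  have h_fac : (0 : ℝ) ≤ i.1.factorial := Nat.cast_nonneg _
  rw [featMap, mul_pow, ← Finset.prod_pow, ← Real.rpow_natCast _ 2, ← Real.rpow_mul h_fac]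
  norm_num [Real.rpow_neg_one, div_eq_inv_mul]

lemma sum_featMap_sq_fiber (m : ℕ) (x : Fin m → ℝ) (p : ℕ) :
    ∑ f : Fin p → Fin m, featMap m x ⟨p, f⟩ ^ 2 = (∑ l, x l ^ 2) ^ p / p.factorial := by
  rw [Fintype.sum_pow, Finset.sum_div]
  exact Finset.sum_congr rfl fun f _ => featMap_sq m x ⟨p, f⟩

theorem hasSum_featMap_sq (m : ℕ) (x : Fin m → ℝ) :
    HasSum (fun i => featMap m x i ^ 2) (Real.exp (∑ l, x l ^ 2)) := by
  refine HasSum.of_sigma_of_nonneg (fun i => sq_nonneg _) ?_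
  simp only [sum_featMap_sq_fiber, Real.exp_eq_exp_ℝ]
  exact NormedSpace.expSeries_div_hasSum_exp _

theorem featMap_sq_summable_general (m : ℕ) (x : Fin m → ℝ) :
    Summable (fun i : FeatIdx m => (featMap m x i) ^ 2) ∧
    ∑' i : FeatIdx m, (featMap m x i) ^ 2 = Real.exp (∑ l : Fin m, (x l) ^ 2) :=
  ⟨(hasSum_featMap_sq m x).summable, (hasSum_featMap_sq m x).tsum_eq⟩

/-- For `m ≥ 1` and any `x ∈ ℝ^m`, the squared feature values are
summable and sum to `e^{‖x‖²}`; in particular `Φ(x)` is square-summable. -/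
theorem featMap_sq_summable (m : ℕ) (hm : 1 ≤ m) (x : Fin m → ℝ) :
    Summable (fun i : FeatIdx m => (featMap m x i) ^ 2) ∧
    ∑' i : FeatIdx m, (featMap m x i) ^ 2 = Real.exp (∑ l : Fin m, (x l) ^ 2) :=
  featMap_sq_summable_general m x
end

section
/- For m ≥ 1 and any q, k ∈ ℝ^m, the family (Φ(q)_{(p,f)} · Φ(k)_{(p,f)})_{(p,f) ∈ I} is summable and Σ_{(p,f) ∈ I} Φ(q)_{(p,f)} Φ(k)_{(p,f)} = e^{qᵀk}. Hence the exponential kernel e^{qᵀk} appearing in softmax attention is the ℓ² inner product of the infinite-dimensional feature vectors Φ(q) and Φ(k), and consequently Σ_{j=0}^{i} e^{q_iᵀk_j} = Σ_{j=0}^{i} ⟨Φ(q_i), Φ(k_j)⟩ for any sequences of queries and keys. -/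
open Matrix

/-! The two factors `(p!)^{-1/2}` combine to `1/p!`, so `Φ(q)_{(p,f)} Φ(k)_{(p,f)}` is
`(∏ j, g (f j)) / p!` with `g a = q a * k a`. Grouping the words `f : Fin p → ι` by their length
`p`, the words of length `p` contribute `(∑ a, g a) ^ p / p!` by the multinomial expansion, so the
whole family sums to the exponential series of `∑ a, g a`; absolute summability follows from the
same computation for `|g|`. -/

open Nat

section WordExpansion

variable {ι : Type*} [Fintype ι]

theorem hasSum_pi_fin_prod_div_factorial (g : ι → ℝ) (p : ℕ) :
    HasSum (fun f : Fin p → ι => (∏ j, g (f j)) / p !) ((∑ a, g a) ^ p / p !) := by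
  rw [Fintype.sum_pow, Finset.sum_div]
  exact hasSum_fintype _

theorem summable_prod_div_factorial (g : ι → ℝ) :
    Summable fun w : Σ p : ℕ, Fin p → ι => (∏ j, g (w.2 j)) / (w.1)! := by
  refine Summable.of_norm ?_
  have hnorm : ∀ w : Σ p : ℕ, Fin p → ι,
      ‖(∏ j, g (w.2 j)) / (w.1)!‖ = (∏ j, |g (w.2 j)|) / (w.1)! := fun w => by
    rw [Real.norm_eq_abs, abs_div, Finset.abs_prod, Nat.abs_cast]
  simp only [hnorm]
  refine (summable_sigma_of_nonneg fun w => by positivity).2 ⟨fun _ => .of_finite, ?_⟩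
  have hfiber (p : ℕ) :
      ∑' f : Fin p → ι, (∏ j, |g (f j)|) / p ! = (∑ a, |g a|) ^ p / p ! :=
    (hasSum_pi_fin_prod_div_factorial (|g ·|) p).tsum_eq
  simpa only [hfiber] using Real.summable_pow_div_factorial (∑ a, |g a|)

theorem hasSum_prod_div_factorial (g : ι → ℝ) :
    HasSum (fun w : Σ p : ℕ, Fin p → ι => (∏ j, g (w.2 j)) / (w.1)!)
      (Real.exp (∑ a, g a)) := by
  rw [Real.exp_eq_exp_ℝ]
  exact (NormedSpace.expSeries_div_hasSum_exp _).sigma_of_hasSum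
    (hasSum_pi_fin_prod_div_factorial g) (summable_prod_div_factorial g)

end WordExpansion

theorem featMap_mul_featMap (m : ℕ) (q k : Fin m → ℝ) (i : FeatIdx m) :
    featMap m q i * featMap m k i = (∏ j, q (i.2 j) * k (i.2 j)) / (i.1)! := by
  have hsqrt :
      (((i.1)! : ℝ) ^ (-(1 / 2 : ℝ))) * ((i.1)! : ℝ) ^ (-(1 / 2 : ℝ)) = ((i.1)! : ℝ)⁻¹ := by
    rw [← Real.rpow_add (by positivity)]
    norm_num [Real.rpow_neg_one]
  rw [featMap, featMap, mul_mul_mul_comm, hsqrt, Finset.prod_mul_distrib, inv_mul_eq_div]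

theorem hasSum_featMap_mul_featMap (m : ℕ) (q k : Fin m → ℝ) :
    HasSum (fun i : FeatIdx m => featMap m q i * featMap m k i) (Real.exp (q ⬝ᵥ k)) := by
  simp only [featMap_mul_featMap]
  exact hasSum_prod_div_factorial fun a => q a * k a

theorem softmax_kernel_is_inner_product_of_features_general (m : ℕ) :
    (∀ q k : Fin m → ℝ,
      Summable (fun i : FeatIdx m => featMap m q i * featMap m k i) ∧
      ∑' i : FeatIdx m, featMap m q i * featMap m k i = Real.exp (q ⬝ᵥ k)) ∧
    (∀ (qs ks : ℕ → Fin m → ℝ) (i : ℕ),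
      ∑ j ∈ Finset.range (i + 1), Real.exp (qs i ⬝ᵥ ks j) =
      ∑ j ∈ Finset.range (i + 1),
        ∑' idx : FeatIdx m, featMap m (qs i) idx * featMap m (ks j) idx) :=
  ⟨fun q k => ⟨(hasSum_featMap_mul_featMap m q k).summable,
      (hasSum_featMap_mul_featMap m q k).tsum_eq⟩,
    fun qs ks i => Finset.sum_congr rfl fun j _ =>
      (hasSum_featMap_mul_featMap m (qs i) (ks j)).tsum_eq.symm⟩

/-- For `m ≥ 1` and any `q, k ∈ ℝ^m`, the family
`(Φ(q)_{(p,f)} Φ(k)_{(p,f)})` is summable with sum `e^{qᵀk}`: the exponential kernel of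
softmax attention is the ℓ² inner product of the infinite-dimensional features `Φ(q)`,
`Φ(k)`. Consequently `Σ_{j=0}^{i} e^{q_iᵀ k_j} = Σ_{j=0}^{i} ⟨Φ(q_i), Φ(k_j)⟩` for any
sequences of queries and keys. -/
theorem softmax_kernel_is_inner_product_of_features (m : ℕ) (hm : 1 ≤ m) :
    (∀ q k : Fin m → ℝ,
      Summable (fun i : FeatIdx m => featMap m q i * featMap m k i) ∧
      ∑' i : FeatIdx m, featMap m q i * featMap m k i = Real.exp (q ⬝ᵥ k)) ∧
    (∀ (qs ks : ℕ → Fin m → ℝ) (i : ℕ),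
      ∑ j ∈ Finset.range (i + 1), Real.exp (qs i ⬝ᵥ ks j) =
      ∑ j ∈ Finset.range (i + 1),
        ∑' idx : FeatIdx m, featMap m (qs i) idx * featMap m (ks j) idx) :=
  softmax_kernel_is_inner_product_of_features_general m
end

section
/- For every n ∈ ℕ there do not exist functions φ, ψ : ℝ → ℝ^n such that e^{qk} = φ(q)ᵀψ(k) for all q, k ∈ ℝ. That is, the exponential kernel of softmax attention admits no exact finite-dimensional separable (feature-map) representation, so its Dynamical Systems Framework representation requires an infinite-dimensional hidden state. -/
open Matrix

/-! If `e^{qk} = φ(q) ⬝ᵥ ψ(k)` with `φ, ψ` valued in `ℝⁿ`, then every matrix `(e^{x_i y_j})`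
factors through `ℝⁿ` and so has rank at most `n`. But for the `n + 1` points `0, 1, …, n` the
matrix `(e^{ij})` is the Vandermonde matrix of the distinct numbers `e^i`, hence invertible. -/

theorem Matrix.rank_of_dotProduct_le {m o ι R : Type*} [Fintype o] [Fintype ι] [CommSemiring R]
    [StrongRankCondition R] (u : m → ι → R) (w : o → ι → R) :
    (Matrix.of fun i j => u i ⬝ᵥ w j).rank ≤ Fintype.card ι :=
  calc (Matrix.of fun i j => u i ⬝ᵥ w j).rank = (Matrix.of u * (Matrix.of w)ᵀ).rank := rfl
    _ ≤ (Matrix.of u).rank := rank_mul_le_left _ _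
    _ ≤ Fintype.card ι := rank_le_card_width _

theorem Real.exp_mul_matrix_eq_vandermonde {m : ℕ} (x : Fin m → ℝ) :
    (Matrix.of fun i j : Fin m => Real.exp (x i * j)) = vandermonde (Real.exp ∘ x) := by
  ext i j
  simp [vandermonde_apply, ← Real.exp_nat_mul, mul_comm]

theorem Real.isUnit_exp_mul_matrix {m : ℕ} {x : Fin m → ℝ} (hx : Function.Injective x) :
    IsUnit (Matrix.of fun i j : Fin m => Real.exp (x i * j)) := by
  rw [isUnit_iff_isUnit_det, isUnit_iff_ne_zero, Real.exp_mul_matrix_eq_vandermonde,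
    det_vandermonde_ne_zero_iff]
  exact Real.exp_injective.comp hx

/-- The exponential kernel `(q, k) ↦ e^{qk}` of softmax attention admits
no exact finite-dimensional separable (feature-map) representation: for every `n ∈ ℕ`
there are no `φ, ψ : ℝ → ℝ^n` with `e^{qk} = φ(q)ᵀψ(k)` for all `q, k ∈ ℝ`. Hence its
Dynamical Systems Framework representation requires an infinite-dimensional hidden
state. -/
theorem softmax_kernel_not_finite_rank (n : ℕ) :
    ¬ ∃ φ ψ : ℝ → Fin n → ℝ, ∀ q k : ℝ, Real.exp (q * k) = φ q ⬝ᵥ ψ k := by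
  rintro ⟨φ, ψ, hφψ⟩
  set M := Matrix.of fun i j : Fin (n + 1) => Real.exp ((i : ℝ) * j)
  have hfull : M.rank = n + 1 := by
    simpa using rank_of_isUnit M
      (Real.isUnit_exp_mul_matrix (Nat.cast_injective.comp Fin.val_injective))
  have hlow : M.rank ≤ n := by
    simpa [M, hφψ] using
      Matrix.rank_of_dotProduct_le (fun i : Fin (n + 1) => φ i) (fun j : Fin (n + 1) => ψ j)
  omega
end

section
/- Let s divide d, and for each head h = 1,…,s let q_i^h, k_i^h ∈ ℝ^{m}, feature maps φ^h, ψ^h : ℝ^{m} → ℝ^{n}, nonzero normalizations η_i^h ∈ ℝ, and value matrices W_V^h ∈ ℝ^{(d/s)×d} be given. For an input sequence u_0,…,u_L ∈ ℝ^d, define the multi-headed separable attention output y_i ∈ ℝ^d by stacking the head outputs y_i^h = Σ_{j=0}^{i} (φ^h(q_i^h)ᵀ ψ^h(k_j^h) / η_i^h) W_V^h u_j ∈ ℝ^{d/s}. Then y equals, at every time step, the output of the LTV system of state dimension N = nd with block-diagonal matrices Λ_0 = I_{nd}, Λ_i = blockdiag_h((η_{i-1}^h/η_i^h) I_{nd/s})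 for i ≥ 1, B_i whose h-th block row is (1/η_i^h)(I_{d/s} ⊗ ψ^h(k_i^h)) W_V^h, C_i = blockdiag_h(I_{d/s} ⊗ φ^h(q_i^h)ᵀ), and D_i = 0. -/
open Matrix

/-!
Separable attention is a normalised cumulative sum: per head, the state
`h_i = (1/η_i) Σ_{j ≤ i} (I ⊗ ψ(k_j)) W_V u_j` is updated by rescaling the old state with
`η_{i-1}/η_i` and adding the new normalised term, and reading it out against `φ(q_i)`
recovers `Σ_{j ≤ i} φ(q_i)ᵀψ(k_j)/η_i · W_V u_j`.
-/

theorem ltvState_eq_of_diagonal_rescaling {S U : Type} [Fintype S] [Fintype U] [DecidableEq S]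
    (Λ : ℕ → Matrix S S ℝ) (B B' : ℕ → Matrix S U ℝ)
    (u : ℕ → U → ℝ) (c : ℕ → S → ℝ) (hc : ∀ t p, c t p ≠ 0)
    (hΛ : ∀ t, Λ (t + 1) = diagonal fun p => c t p / c (t + 1) p)
    (hB : ∀ t, B t = diagonal (c t)⁻¹ * B' t) (i : ℕ) :
    ltvState Λ B u i = fun p => (∑ j ∈ Finset.range (i + 1), (B' j *ᵥ u j) p) / c i p := by
  funext p
  induction i with
  | zero =>
    simp [ltvState, hB, ← mulVec_mulVec, mulVec_diagonal, div_eq_inv_mul]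
  | succ i ih =>
    rw [ltvState, Pi.add_apply, hΛ, hB, ← mulVec_mulVec, mulVec_diagonal, mulVec_diagonal, ih,
      Pi.inv_apply, Finset.sum_range_succ _ (i + 1)]
    field_simp [hc i p]

theorem of_ite_eq_fst_mulVec_apply {S R : Type} [Fintype S] [DecidableEq S] [Fintype R]
    (f : S → R → ℝ) (v : S × R → ℝ) (p : S) :
    ((of fun (j : S) (pp : S × R) => if j = pp.1 then f j pp.2 else 0) *ᵥ v) p =
      ∑ r, f p r * v (p, r) := by
  simp [mulVec, dotProduct, Fintype.sum_prod_type, ite_mul]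

theorem multihead_separable_attention_as_ltv_general (s e m n : ℕ)
    (q k : ℕ → Fin s → Fin m → ℝ)
    (φ ψ : Fin s → (Fin m → ℝ) → Fin n → ℝ)
    (η : ℕ → Fin s → ℝ) (hη : ∀ i h, η i h ≠ 0)
    (WV : Fin s → Matrix (Fin e) (Fin s × Fin e) ℝ)
    (u : ℕ → Fin s × Fin e → ℝ) (i : ℕ) :
    (fun p : Fin s × Fin e =>
      (∑ j ∈ Finset.range (i + 1),
        (φ p.1 (q i p.1) ⬝ᵥ ψ p.1 (k j p.1) / η i p.1) • (WV p.1 *ᵥ u j)) p.2) =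
    ltvOutput
      (fun t => if t = 0 then (1 : Matrix ((Fin s × Fin e) × Fin n) ((Fin s × Fin e) × Fin n) ℝ)
        else Matrix.of fun pp qq : (Fin s × Fin e) × Fin n =>
          if pp = qq then η (t - 1) pp.1.1 / η t pp.1.1 else 0)
      (fun t => Matrix.of fun (pp : (Fin s × Fin e) × Fin n) (j : Fin s × Fin e) =>
        (1 / η t pp.1.1) * (ψ pp.1.1 (k t pp.1.1) pp.2 * WV pp.1.1 pp.1.2 j))
      (fun t => Matrix.of fun (j : Fin s × Fin e) (pp : (Fin s × Fin e) × Fin n) =>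
        if j = pp.1 then φ j.1 (q t j.1) pp.2 else 0)
      (fun _ => (0 : Matrix (Fin s × Fin e) (Fin s × Fin e) ℝ)) u i := by
  set B' : ℕ → Matrix ((Fin s × Fin e) × Fin n) (Fin s × Fin e) ℝ := fun t =>
    of fun pp j => ψ pp.1.1 (k t pp.1.1) pp.2 * WV pp.1.1 pp.1.2 j
  have hB' : ∀ j p r, (B' j *ᵥ u j) (p, r) = ψ p.1 (k j p.1) r * (WV p.1 *ᵥ u j) p.2 := by
    intro j p r
    simp [B', mulVec, dotProduct, Finset.mul_sum, mul_assoc]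
  funext p
  rw [ltvOutput, zero_mulVec, add_zero, of_ite_eq_fst_mulVec_apply,
    ltvState_eq_of_diagonal_rescaling (B' := B') (c := fun t pp => η t pp.1.1)
      (hc := fun t pp => hη t pp.1.1)]
  case hΛ =>
    intro t
    simp only [if_neg t.succ_ne_zero]
    rfl
  case hB =>
    intro t
    ext pp j
    simp [B', diagonal_mul]
  simp only [hB', Finset.sum_apply, Pi.smul_apply, smul_eq_mul, dotProduct,
    Finset.sum_mul, Finset.mul_sum, Finset.sum_div]
  rw [Finset.sum_comm]
  refine Finset.sum_congr rfl fun r _ => Finset.sum_congr rfl fun j _ => ?_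
  ring

/-- Multi-headed separable attention with `s` heads of head dimension
`e = d/s` (so `d = s·e`; the model dimension `ℝ^d` is indexed by `Fin s × Fin e`, stacking
the head outputs `y_i^h = Σ_{j=0}^{i} (φ^h(q_i^h)ᵀ ψ^h(k_j^h)/η_i^h) W_V^h u_j ∈ ℝ^{d/s}`)
equals, at every time step, the output of the LTV system of state dimension `N = n·d`
with block-diagonal matrices `Λ_0 = I_{nd}`,
`Λ_i = blockdiag_h((η_{i-1}^h/η_i^h) I_{nd/s})` for `i ≥ 1`, `B_i` whose `h`-th block row
is `(1/η_i^h)(I_{d/s} ⊗ ψ^h(k_i^h)) W_V^h`, `C_i = blockdiag_h(I_{d/s} ⊗ φ^h(q_i^h)ᵀ)`,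
and `D_i = 0`. -/
theorem multihead_separable_attention_as_ltv (s e d m n : ℕ) (hd : d = s * e)
    (q k : ℕ → Fin s → Fin m → ℝ)
    (φ ψ : Fin s → (Fin m → ℝ) → Fin n → ℝ)
    (η : ℕ → Fin s → ℝ) (hη : ∀ i h, η i h ≠ 0)
    (WV : Fin s → Matrix (Fin e) (Fin s × Fin e) ℝ)
    (u : ℕ → Fin s × Fin e → ℝ) (i : ℕ) :
    (fun p : Fin s × Fin e =>
      (∑ j ∈ Finset.range (i + 1),
        (φ p.1 (q i p.1) ⬝ᵥ ψ p.1 (k j p.1) / η i p.1) • (WV p.1 *ᵥ u j)) p.2) =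
    ltvOutput
      (fun t => if t = 0 then (1 : Matrix ((Fin s × Fin e) × Fin n) ((Fin s × Fin e) × Fin n) ℝ)
        else Matrix.of fun pp qq : (Fin s × Fin e) × Fin n =>
          if pp = qq then η (t - 1) pp.1.1 / η t pp.1.1 else 0)
      (fun t => Matrix.of fun (pp : (Fin s × Fin e) × Fin n) (j : Fin s × Fin e) =>
        (1 / η t pp.1.1) * (ψ pp.1.1 (k t pp.1.1) pp.2 * WV pp.1.1 pp.1.2 j))
      (fun t => Matrix.of fun (j : Fin s × Fin e) (pp : (Fin s × Fin e) × Fin n) =>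
        if j = pp.1 then φ j.1 (q t j.1) pp.2 else 0)
      (fun _ => (0 : Matrix (Fin s × Fin e) (Fin s × Fin e) ℝ)) u i :=
  multihead_separable_attention_as_ltv_general s e m n q k φ ψ η hη WV u i
end
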